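/- Subject to the horizontal-shear boundary condition BC2, if L>2 then J_L=0; in fact there exists an admissible pair (u,β) satisfying BC2 with E_L(u,β)=0. -/

import Mathlib

open MeasureTheory Set Filter Topology
open scoped ENNReal NNReal

noncomputable section

abbrev Pt2 := Fin 2 → ℝ
abbrev Mat2 := Matrix (Fin 2) (Fin 2) ℝ

/-- The rectangle Ω_L = (0,1) × (0,L). -/
def Omega (L : ℝ) : Set Pt2 := {x | x 0 ∈ Ioo (0:ℝ) 1 ∧ x 1 ∈ Ioo (0:ℝ) L}

/-- Partial derivative ∂_j of a scalar function. -/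
def pd (j : Fin 2) (f : Pt2 → ℝ) (x : Pt2) : ℝ := fderiv ℝ f x (Pi.single j 1)

/-- C¹ test function compactly supported in Ω_L. -/
def IsTest (L : ℝ) (f : Pt2 → ℝ) : Prop :=
  ContDiff ℝ 1 f ∧ HasCompactSupport f ∧ tsupport f ⊆ Omega L

/-- Du is the weak (distributional) gradient of u on Ω_L. -/
def IsWeakGradient (L : ℝ) (u : Pt2 → Pt2) (Du : Pt2 → Mat2) : Prop :=
  ∀ f : Pt2 → ℝ, IsTest L f → ∀ i j,
    ∫ x in Omega L, u x i * pd j f x = - ∫ x in Omega L, Du x i j * f x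

/-- Symmetric part of a matrix. -/
def symPart (M : Mat2) : Mat2 := (2:ℝ)⁻¹ • (M + M.transpose)

/-- Squared Frobenius norm. -/
def normSq (M : Mat2) : ℝ := ∑ i, ∑ j, (M i j)^2

/-- The two slip matrices (up to scalar multiples). -/
def SlipSet : Set Mat2 :=
  {M | ∃ s : ℝ, M = s • !![(1:ℝ), -1; 1, -1] ∨ M = s • !![(1:ℝ), 1; -1, -1]}

/-- The single-slip side condition. -/
def SingleSlip (L : ℝ) (β : Pt2 → Mat2) : Prop :=
  ∀ᵐ x ∂(volume.restrict (Omega L)), β x ∈ SlipSet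

/-- Total variation of the row-wise distributional curl of β on Ω_L. -/
def TVcurl (L : ℝ) (β : Pt2 → Mat2) : ℝ≥0∞ :=
  sSup {t | ∃ φ : Fin 2 → Pt2 → ℝ,
    (∀ i, IsTest L (φ i)) ∧ (∀ i x, φ i x ∈ Icc (-1:ℝ) 1) ∧
    t = ENNReal.ofReal (∑ i, ∫ x in Omega L,
          (β x i 1 * pd 0 (φ i) x - β x i 0 * pd 1 (φ i) x))}

/-- The energy E_L(u,β) (expressed through the weak gradient Du of u). -/
def Energy (L σ : ℝ) (Du β : Pt2 → Mat2) : ℝ≥0∞ :=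
  (∫⁻ x in Omega L, ENNReal.ofReal (normSq (symPart (Du x - β x)))) +
    ENNReal.ofReal σ * TVcurl L β

/-- Admissible pair (u,β), with Du the weak gradient of u. -/
def IsAdmissible (L : ℝ) (u : Pt2 → Pt2) (Du β : Pt2 → Mat2) : Prop :=
  ContinuousOn u (closure (Omega L)) ∧
  IsWeakGradient L u Du ∧
  (∀ i j, MemLp (fun x => Du x i j) 2 (volume.restrict (Omega L))) ∧
  (∀ i j, LocallyIntegrableOn (fun x => β x i j) (Omega L)) ∧
  SingleSlip L β

/-- Dirichlet boundary conditions: u = 0 at x₂ = 0 and u = γ v at x₂ = L. -/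
def BCv (L γ : ℝ) (v : Fin 2 → ℝ) (u : Pt2 → Pt2) : Prop :=
  (∀ x ∈ closure (Omega L), x 1 = 0 → u x = 0) ∧
  (∀ x ∈ closure (Omega L), x 1 = L → u x = γ • v)

/-- The infimum energy J_L. -/
def J (L σ γ : ℝ) (v : Fin 2 → ℝ) : ℝ≥0∞ :=
  sInf {e | ∃ u Du β, IsAdmissible L u Du β ∧ BCv L γ v u ∧ TVcurl L β ≠ ⊤ ∧
    e = Energy L σ Du β}

/-!
The displacement `u = F(x₂ - x₁)·(1, 1) + G(x₁ + x₂)·(1, -1)` has gradient `-F'·A + G'·B`, where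
`A`, `B` are the two slip matrices. Taking `β = ∇u` kills the elastic term, and a gradient is curl
free, so the energy vanishes; `β` is single-slip wherever `F'` or `G'` vanishes. For `L > 2` both
profiles fit: `G` climbs from `0` to `γ/2` while `x₁ + x₂ ∈ [1, L/2]` and `F` while
`x₂ - x₁ ∈ [L/2, L - 1]`, two bands that do not meet in `Ω_L`, and then `u = 0` at `x₂ = 0`
and `u = (γ, 0)` at `x₂ = L`.
-/

section Calculus

variable {f g : Pt2 → ℝ}

lemma ContDiff.continuous_pd (hf : ContDiff ℝ 1 f) (j : Fin 2) : Continuous (pd j f) :=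
  (hf.continuous_fderiv one_ne_zero).clm_apply continuous_const

lemma ContDiff.contDiff_pd (hf : ContDiff ℝ 2 f) (j : Fin 2) : ContDiff ℝ 1 (pd j f) :=
  (hf.fderiv_right (m := 1) (by norm_num)).clm_apply contDiff_const

lemma HasCompactSupport.pd (hf : HasCompactSupport f) (j : Fin 2) : HasCompactSupport (pd j f) :=
  hf.fderiv_apply ℝ _

lemma pd_pd_comm (hf : ContDiff ℝ 2 f) (i j : Fin 2) (x : Pt2) :
    pd i (pd j f) x = pd j (pd i f) x := by
  have hdiff : Differentiable ℝ (fderiv ℝ f) :=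
    (hf.fderiv_right (m := 1) (by norm_num)).differentiable one_ne_zero
  have hsymm : IsSymmSndFDerivAt ℝ f x := hf.contDiffAt.isSymmSndFDerivAt (by simp)
  change fderiv ℝ (fun y => fderiv ℝ f y (Pi.single j 1)) x (Pi.single i 1)
    = fderiv ℝ (fun y => fderiv ℝ f y (Pi.single i 1)) x (Pi.single j 1)
  simp only [fderiv_clm_apply (hdiff x) (differentiableAt_const _)]
  simpa using hsymm (Pi.single i 1) (Pi.single j 1)

lemma integral_mul_pd_eq_neg (hg : ContDiff ℝ 1 g) (hf : ContDiff ℝ 1 f)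
    (hfc : HasCompactSupport f) (j : Fin 2) :
    ∫ x, g x * pd j f x = -∫ x, pd j g x * f x :=
  integral_mul_fderiv_eq_neg_fderiv_mul_of_integrable
    (((hg.continuous_pd j).mul hf.continuous).integrable_of_hasCompactSupport hfc.mul_left)
    ((hg.continuous.mul (hf.continuous_pd j)).integrable_of_hasCompactSupport (hfc.pd j).mul_left)
    ((hg.continuous.mul hf.continuous).integrable_of_hasCompactSupport hfc.mul_left)
    (fun x _ => (hg.differentiable one_ne_zero) x) (fun x _ => (hf.differentiable one_ne_zero) x)

end Calculus

lemma isOpen_Omega (L : ℝ) : IsOpen (Omega L) :=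
  (isOpen_Ioo.preimage (continuous_apply 0)).inter (isOpen_Ioo.preimage (continuous_apply 1))

lemma Omega_subset_Icc (L : ℝ) : Omega L ⊆ Icc 0 ![1, L] := fun x hx =>
  ⟨fun i => by fin_cases i <;> simp [hx.1.1.le, hx.2.1.le],
   fun i => by fin_cases i <;> simp [hx.1.2.le, hx.2.2.le]⟩

lemma closure_Omega_subset (L : ℝ) : closure (Omega L) ⊆ {x | x 0 ∈ Icc 0 1} :=
  closure_minimal (fun _ hx => Ioo_subset_Icc_self hx.1)
    (isClosed_Icc.preimage (continuous_apply 0))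

section Rectangle

variable {L : ℝ} {f g : Pt2 → ℝ}

lemma Continuous.memLp_restrict_Omega {p : ℝ≥0∞} (hf : Continuous f) :
    MemLp f p (volume.restrict (Omega L)) := by
  have hK : IsCompact (Icc (0 : Pt2) ![1, L]) := isCompact_Icc
  have : IsFiniteMeasure (volume.restrict (Icc (0 : Pt2) ![1, L])) :=
    isFiniteMeasure_restrict.mpr hK.measure_lt_top.ne
  obtain ⟨C, hC⟩ := hK.exists_bound_of_continuousOn hf.continuousOn
  refine (MemLp.of_bound hf.aestronglyMeasurable C ?_).mono_measure
    (Measure.restrict_mono (Omega_subset_Icc L) le_rfl)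
  exact ae_restrict_of_forall_mem hK.measurableSet hC

lemma IsTest.eq_zero_of_notMem (hf : IsTest L f) {x : Pt2} (hx : x ∉ Omega L) : f x = 0 :=
  image_eq_zero_of_notMem_tsupport fun h => hx (hf.2.2 h)

lemma IsTest.pd_eq_zero_of_notMem (hf : IsTest L f) {x : Pt2} (hx : x ∉ Omega L) (j : Fin 2) :
    pd j f x = 0 :=
  image_eq_zero_of_notMem_tsupport fun h => hx (hf.2.2 (tsupport_fderiv_apply_subset ℝ _ h))

lemma IsTest.integrableOn_mul_pd (hf : IsTest L f) (hg : Continuous g) (j : Fin 2) :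
    IntegrableOn (fun x => g x * pd j f x) (Omega L) :=
  ((hg.mul (hf.1.continuous_pd j)).integrable_of_hasCompactSupport
    (hf.2.1.pd j).mul_left).integrableOn

lemma IsTest.setIntegral_mul_pd (hf : IsTest L f) (hg : ContDiff ℝ 1 g) (j : Fin 2) :
    ∫ x in Omega L, g x * pd j f x = -∫ x in Omega L, pd j g x * f x := by
  rw [setIntegral_eq_integral_of_forall_compl_eq_zero
      fun x hx => by rw [hf.pd_eq_zero_of_notMem hx, mul_zero],
    setIntegral_eq_integral_of_forall_compl_eq_zero
      fun x hx => by rw [hf.eq_zero_of_notMem hx, mul_zero]]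
  exact integral_mul_pd_eq_neg hg hf.1 hf.2.1 j

lemma IsTest.setIntegral_curl_pd_eq_zero (hf : IsTest L f) (hg : ContDiff ℝ 2 g) :
    ∫ x in Omega L, (pd 1 g x * pd 0 f x - pd 0 g x * pd 1 f x) = 0 := by
  rw [integral_sub (hf.integrableOn_mul_pd (hg.contDiff_pd 1).continuous 0)
      (hf.integrableOn_mul_pd (hg.contDiff_pd 0).continuous 1),
    hf.setIntegral_mul_pd (hg.contDiff_pd 1) 0, hf.setIntegral_mul_pd (hg.contDiff_pd 0) 1]
  simp_rw [pd_pd_comm hg 0 1, sub_self]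

end Rectangle

def jac (u : Pt2 → Pt2) (x : Pt2) : Mat2 := Matrix.of fun i j => pd j (fun y => u y i) x

section Jacobian

variable {L : ℝ} {u : Pt2 → Pt2}

lemma isWeakGradient_jac (hu : ContDiff ℝ 1 u) : IsWeakGradient L u (jac u) :=
  fun _ hf i j => hf.setIntegral_mul_pd (contDiff_pi.mp hu i) j

lemma continuous_jac_apply (hu : ContDiff ℝ 1 u) (i j : Fin 2) :
    Continuous fun x => jac u x i j :=
  (contDiff_pi.mp hu i).continuous_pd j

lemma TVcurl_jac_eq_zero (hu : ContDiff ℝ 2 u) : TVcurl L (jac u) = 0 := by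
  refine le_antisymm (sSup_le ?_) bot_le
  rintro t ⟨φ, hφ, -, rfl⟩
  simp [jac, fun i => (hφ i).setIntegral_curl_pd_eq_zero (contDiff_pi.mp hu i)]

lemma isAdmissible_jac (hu : ContDiff ℝ 2 u) (hslip : SingleSlip L (jac u)) :
    IsAdmissible L u (jac u) (jac u) := by
  have hu1 : ContDiff ℝ 1 u := hu.of_le (by norm_num)
  exact ⟨hu1.continuous.continuousOn, isWeakGradient_jac hu1,
    fun i j => (continuous_jac_apply hu1 i j).memLp_restrict_Omega,
    fun i j => (continuous_jac_apply hu1 i j).locallyIntegrable.locallyIntegrableOn _, hslip⟩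

end Jacobian

lemma Energy_self (L σ : ℝ) (β : Pt2 → Mat2) :
    Energy L σ β β = ENNReal.ofReal σ * TVcurl L β := by
  simp [Energy, symPart, normSq]

def smoothStep (a b t : ℝ) : ℝ := Real.smoothTransition ((t - a) / (b - a))

section SmoothStep

variable {a b t : ℝ}

lemma contDiff_smoothStep {n : ℕ∞} : ContDiff ℝ n (smoothStep a b) :=
  Real.smoothTransition.contDiff.comp ((contDiff_id.sub contDiff_const).div_const _)

lemma smoothStep_of_le (hab : a < b) (ht : t ≤ a) : smoothStep a b t = 0 :=
  Real.smoothTransition.zero_of_nonpos (div_nonpos_of_nonpos_of_nonneg (by linarith) (by linarith))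

lemma smoothStep_of_ge (hab : a < b) (ht : b ≤ t) : smoothStep a b t = 1 :=
  Real.smoothTransition.one_of_one_le ((one_le_div (by linarith)).mpr (by linarith))

lemma deriv_smoothStep_of_lt (hab : a < b) (ht : t < a) : deriv (smoothStep a b) t = 0 := by
  have : smoothStep a b =ᶠ[𝓝 t] fun _ => 0 :=
    eventually_lt_nhds ht |>.mono fun _ hs => smoothStep_of_le hab hs.le
  rw [this.deriv_eq, deriv_const]

lemma deriv_smoothStep_of_gt (hab : a < b) (ht : b < t) : deriv (smoothStep a b) t = 0 := by
  have : smoothStep a b =ᶠ[𝓝 t] fun _ => 1 :=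
    eventually_gt_nhds ht |>.mono fun _ hs => smoothStep_of_ge hab hs.le
  rw [this.deriv_eq, deriv_const]

end SmoothStep

def shearPair (F G : ℝ → ℝ) (x : Pt2) : Pt2 :=
  ![F (x 1 - x 0) + G (x 0 + x 1), F (x 1 - x 0) - G (x 0 + x 1)]

section ShearPair

variable {F G : ℝ → ℝ}

lemma contDiff_shearPair {n : ℕ∞} (hF : ContDiff ℝ n F) (hG : ContDiff ℝ n G) :
    ContDiff ℝ n (shearPair F G) := by
  have hF' : ContDiff ℝ n fun x : Pt2 => F (x 1 - x 0) :=
    hF.comp ((contDiff_apply ℝ ℝ 1).sub (contDiff_apply ℝ ℝ 0))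
  have hG' : ContDiff ℝ n fun x : Pt2 => G (x 0 + x 1) :=
    hG.comp ((contDiff_apply ℝ ℝ 0).add (contDiff_apply ℝ ℝ 1))
  refine contDiff_pi.mpr fun i => ?_
  fin_cases i
  exacts [hF'.add hG', hF'.sub hG']

lemma jac_shearPair (hF : Differentiable ℝ F) (hG : Differentiable ℝ G) (x : Pt2) :
    jac (shearPair F G) x = (-deriv F (x 1 - x 0)) • !![(1:ℝ), -1; 1, -1]
      + deriv G (x 0 + x 1) • !![(1:ℝ), 1; -1, -1] := by
  have hsub : HasFDerivAt (fun y : Pt2 => y 1 - y 0) _ x :=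
    (hasFDerivAt_apply (𝕜 := ℝ) 1 x).fun_sub (hasFDerivAt_apply 0 x)
  have hadd : HasFDerivAt (fun y : Pt2 => y 0 + y 1) _ x :=
    (hasFDerivAt_apply (𝕜 := ℝ) 0 x).fun_add (hasFDerivAt_apply 1 x)
  have hF' : HasFDerivAt (fun y : Pt2 => F (y 1 - y 0)) _ x :=
    (hF _).hasDerivAt.comp_hasFDerivAt x hsub
  have hG' : HasFDerivAt (fun y : Pt2 => G (y 0 + y 1)) _ x :=
    (hG _).hasDerivAt.comp_hasFDerivAt x hadd
  ext i j
  fin_cases i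
  · change fderiv ℝ (fun y => F (y 1 - y 0) + G (y 0 + y 1)) x (Pi.single j 1) = _
    rw [(hF'.fun_add hG').fderiv]
    fin_cases j <;> simp
  · change fderiv ℝ (fun y => F (y 1 - y 0) - G (y 0 + y 1)) x (Pi.single j 1) = _
    rw [(hF'.fun_sub hG').fderiv]
    fin_cases j <;> simp [sub_eq_add_neg]

end ShearPair

lemma singleSlip_jac_shearPair {L : ℝ} {F G : ℝ → ℝ} (hF : Differentiable ℝ F)
    (hG : Differentiable ℝ G)
    (hsep : ∀ x ∈ Omega L, deriv F (x 1 - x 0) = 0 ∨ deriv G (x 0 + x 1) = 0) :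
    SingleSlip L (jac (shearPair F G)) := by
  filter_upwards [ae_restrict_mem (isOpen_Omega L).measurableSet] with x hx
  rw [jac_shearPair hF hG]
  rcases hsep x hx with h | h
  · exact ⟨deriv G (x 0 + x 1), Or.inr (by simp [h])⟩
  · exact ⟨-deriv F (x 1 - x 0), Or.inl (by simp [h])⟩

lemma BCv_shearPair {L γ : ℝ} {F G : ℝ → ℝ}
    (hbot : ∀ s ∈ Icc (0 : ℝ) 1, F (-s) = 0 ∧ G s = 0)
    (htop : ∀ s ∈ Icc (0 : ℝ) 1, F (L - s) = γ / 2 ∧ G (s + L) = γ / 2) :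
    BCv L γ ![1, 0] (shearPair F G) := by
  constructor
  · intro x hx hx1
    obtain ⟨hF, hG⟩ := hbot (x 0) (closure_Omega_subset L hx)
    ext i
    fin_cases i <;> simp [shearPair, hx1, hF, hG]
  · intro x hx hx1
    obtain ⟨hF, hG⟩ := htop (x 0) (closure_Omega_subset L hx)
    ext i
    fin_cases i <;> simp [shearPair, hx1, hF, hG]

lemma exists_contDiff_singleSlip_BCv {L : ℝ} (hL : 2 < L) (γ : ℝ) :
    ∃ u : Pt2 → Pt2, ContDiff ℝ 2 u ∧ SingleSlip L (jac u) ∧ BCv L γ ![1, 0] u := by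
  have hF_ramp : L / 2 < L - 1 := by linarith
  have hG_ramp : 1 < L / 2 := by linarith
  set F : ℝ → ℝ := fun t => γ / 2 * smoothStep (L / 2) (L - 1) t
  set G : ℝ → ℝ := fun t => γ / 2 * smoothStep 1 (L / 2) t
  have hFG : ContDiff ℝ 2 F ∧ ContDiff ℝ 2 G :=
    ⟨contDiff_const.mul contDiff_smoothStep, contDiff_const.mul contDiff_smoothStep⟩
  have hstep {a b : ℝ} : Differentiable ℝ (smoothStep a b) :=
    contDiff_smoothStep.differentiable one_ne_zero
  refine ⟨shearPair F G, contDiff_shearPair hFG.1 hFG.2,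
    singleSlip_jac_shearPair (hFG.1.differentiable two_ne_zero)
      (hFG.2.differentiable two_ne_zero) fun x hx => ?_, BCv_shearPair ?_ ?_⟩
  · rcases lt_or_ge (x 1 - x 0) (L / 2) with h | h
    · left
      rw [deriv_const_mul _ (hstep _), deriv_smoothStep_of_lt hF_ramp h, mul_zero]
    · right
      have : L / 2 < x 0 + x 1 := by linarith [hx.1.1]
      rw [deriv_const_mul _ (hstep _), deriv_smoothStep_of_gt hG_ramp this, mul_zero]
  · intro s hs
    simp only [F, G]
    rw [smoothStep_of_le hF_ramp (by linarith [hs.1]), smoothStep_of_le hG_ramp hs.2]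
    simp
  · intro s hs
    simp only [F, G]
    rw [smoothStep_of_ge hF_ramp (by linarith [hs.2]),
      smoothStep_of_ge hG_ramp (by linarith [hs.1])]
    simp

theorem J_eq_zero_of_two_lt_BC2_general (L σ γ : ℝ) (hL : 2 < L) :
    J L σ γ ![1, 0] = 0 ∧
    ∃ u Du β, IsAdmissible L u Du β ∧ BCv L γ ![1, 0] u ∧ TVcurl L β ≠ ⊤ ∧
      Energy L σ Du β = 0 := by
  obtain ⟨u, hu, hslip, hbc⟩ := exists_contDiff_singleSlip_BCv hL γ
  have hadm := isAdmissible_jac hu hslip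
  have htv : TVcurl L (jac u) = 0 := TVcurl_jac_eq_zero hu
  have hE : Energy L σ (jac u) (jac u) = 0 := by rw [Energy_self, htv, mul_zero]
  have hfin : TVcurl L (jac u) ≠ ⊤ := htv ▸ ENNReal.zero_ne_top
  exact ⟨le_antisymm (sInf_le ⟨u, _, _, hadm, hbc, hfin, hE.symm⟩) bot_le,
    u, _, _, hadm, hbc, hfin, hE⟩

/-- Under BC2 (horizontal shear), L > 2 implies J_L = 0; in fact there is
an admissible pair satisfying BC2 with zero energy. -/
theorem J_eq_zero_of_two_lt_BC2 (L σ γ : ℝ) (hσ : 0 < σ) (hγ : 0 < γ) (hL : 2 < L) :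
    J L σ γ ![1, 0] = 0 ∧
    ∃ u Du β, IsAdmissible L u Du β ∧ BCv L γ ![1, 0] u ∧ TVcurl L β ≠ ⊤ ∧
      Energy L σ Du β = 0 :=
  J_eq_zero_of_two_lt_BC2_general L σ γ hL

end
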